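/- Let k be a nonnegative integer, n a positive integer, and 0 < p < 1 with q = 1 - p, and suppose k ≤ p·n. Then 1 ≤ L(n,k,p) ≤ B_{n,k}(p)/b_{n,k}(p) ≤ U(n,k,p) < 2·L(n,k,p), and all of these inequalities are strict when k ≥ 1. If in addition 0 < f < p where f = k/n, then 1 < L(n,k,p) < B_{n,k}(p)/b_{n,k}(p) < U(n,k,p) ≤ V(n,k,p,0) < (1-f)·p/(p-f). -/

import Mathlib

open Real

/-- Binomial probability `b_{n,k}(p) = C(n,k) p^k (1-p)^(n-k)`. -/
noncomputable def b (n k : ℕ) (p : ℝ) : ℝ :=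
  (n.choose k : ℝ) * p ^ k * (1 - p) ^ (n - k)

/-- Lower tail probability `B_{n,k}(p) = ∑_{j=0}^k C(n,j) p^j (1-p)^(n-j)`. -/
noncomputable def B (n k : ℕ) (p : ℝ) : ℝ :=
  ∑ j ∈ Finset.range (k + 1), (n.choose j : ℝ) * p ^ j * (1 - p) ^ (n - j)

/-- `L(n,k,p) = (k + 1 - pn + √((pn - k + 1)² + 4qk))/2` with `q = 1-p`. -/
noncomputable def L (n k p : ℝ) : ℝ :=
  (k + 1 - p * n + Real.sqrt ((p * n - k + 1) ^ 2 + 4 * (1 - p) * k)) / 2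

/-- `V(n,k,p,a) = a + p(n - k + a + 1)/(pn + p - k + a)`. -/
noncomputable def V (n k p a : ℝ) : ℝ :=
  a + p * (n - k + a + 1) / (p * n + p - k + a)

/-- `U(n,k,p) = min_{a ∈ ℕ₀} V(n,k,p,a)`. -/
noncomputable def U (n k p : ℝ) : ℝ := ⨅ a : ℕ, V n k p (a : ℝ)
/-!
Write `S_k = B_{n,k}(p) / b_{n,k}(p)` and `r_k = (k+1)q / ((n-k)p)`. From
`(k+1) q b_{n,k+1} = (n-k) p b_{n,k}` one gets `S_0 = 1` and `S_{k+1} = 1 + r_k S_k`, and `r_k < 1`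
as long as `k + 1 ≤ pn`. Each bound compares `S` with a strict sub- or supersolution of this
recurrence: `L(n,k,p)` is the positive root of `x² + (pn-k-1)x = (n-k)p` and satisfies
`L_{k+1} < 1 + r_k L_k`, while `G_k = V(n,k,p,0) = p(n-k+1)/(pn+p-k)` satisfies
`G_{k+1} > 1 + r_k G_k`. Since `S_{k+a} < a + S_k` and `V(n,k,p,a) = a + G_{k-a}`, also `S_k ≤ V(n,k,p,a)`
for every `a`, and the infimum `U` is attained because `V(n,k,p,a) > a`. Finally
`V(n,k,p,a) = a + p + D/(a+c)` with `c = p(n+1) - k`, `D = pq(n+1)`, and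
`2L = 1 + p - c + √(4D + (c+p-1)²)`; taking `a = ⌈√D - c⌉₊`, or `a = 0` when `√D ≤ c`, gives `U < 2L`.
-/

lemma le_and_lt_of_succ_sub_mul_lt {x y r : ℕ → ℝ} {K : ℕ} (h0 : x 0 ≤ y 0)
    (hr : ∀ j < K, 0 ≤ r j) (hstep : ∀ j < K, x (j + 1) - r j * x j < y (j + 1) - r j * y j) :
    x K ≤ y K ∧ (0 < K → x K < y K) := by
  induction K with
  | zero => exact ⟨h0, fun h => absurd h (lt_irrefl 0)⟩
  | succ K ih =>
    have hle := (ih (fun j hj => hr j (by omega)) (fun j hj => hstep j (by omega))).1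
    have hlt : x (K + 1) < y (K + 1) := by
      nlinarith [hstep K K.lt_succ_self, mul_nonneg (hr K K.lt_succ_self) (sub_nonneg.2 hle)]
    exact ⟨hlt.le, fun _ => hlt⟩

lemma add_div_lt_one_add_two_mul_sqrt {x D : ℝ} (hD : 0 < D) (h1 : √D ≤ x) (h2 : x < √D + 1) :
    x + D / x < 1 + 2 * √D := by
  have hx : 0 < x := by linarith [Real.sqrt_pos.2 hD]
  have : (x - √D) * (x - √D) ≤ (x - √D) * 1 :=
    mul_le_mul_of_nonneg_left (by linarith) (by linarith)
  rw [← lt_sub_iff_add_lt', div_lt_iff₀ hx]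
  nlinarith [Real.sq_sqrt hD.le, Real.sqrt_pos.2 hD]

lemma add_lt_one_add_sqrt {p c t : ℝ} (hp0 : 0 < p) (hp1 : p < 1) (hpc : p ≤ c) (hqt : 1 - p ≤ t)
    (htc : t ≤ c) : t + c < 1 + √(4 * (t * c) + (c + p - 1) ^ 2) := by
  have : t + c - 1 < √(4 * (t * c) + (c + p - 1) ^ 2) := by
    apply Real.lt_sqrt_of_sq_lt
    nlinarith [mul_nonneg (by linarith : 0 ≤ t) (sub_nonneg.2 htc), mul_pos (by linarith : 0 < t)
      (by linarith : 0 < c), mul_le_mul_of_nonneg_left hpc hp0.le, sq_nonneg (1 - p)]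
  linarith

noncomputable def quadRoot (m w : ℝ) : ℝ := (-m + √(m ^ 2 + 4 * w)) / 2

section quadRoot

variable {m w y : ℝ}

lemma quadRoot_sq_add_mul (h : 0 ≤ m ^ 2 + 4 * w) : quadRoot m w ^ 2 + m * quadRoot m w = w := by
  unfold quadRoot
  linear_combination Real.sq_sqrt h / 4

lemma le_quadRoot_of (h : y ^ 2 + m * y ≤ w) : y ≤ quadRoot m w := by
  have : 2 * y + m ≤ √(m ^ 2 + 4 * w) := Real.le_sqrt_of_sq_le (by linarith)
  unfold quadRoot
  linarith

lemma lt_quadRoot_of (h : y ^ 2 + m * y < w) : y < quadRoot m w := by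
  have : 2 * y + m < √(m ^ 2 + 4 * w) := Real.lt_sqrt_of_sq_lt (by linarith)
  unfold quadRoot
  linarith

lemma quadRoot_lt_of (h : w < y ^ 2 + m * y) (hy : 0 < 2 * y + m) : quadRoot m w < y := by
  have : √(m ^ 2 + 4 * w) < 2 * y + m := (Real.sqrt_lt' hy).2 (by linarith)
  unfold quadRoot
  linarith

-- With `m = pn - k - 1` and `w = (n - k)p` this is `L_{k+1} < 1 + r_k L_k`.
lemma quadRoot_sub_lt {p : ℝ} (hm : 0 ≤ m) (hp : 0 < p) (hmw : m + p < w)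
    (hw : p * (m + p) < w) :
    quadRoot (m - 1) (w - p) < 1 + (w - m - p) / w * quadRoot m w := by
  have hw0 : 0 < w := by linarith
  set x := quadRoot m w
  have hx : x ^ 2 + m * x = w := quadRoot_sq_add_mul (by positivity)
  have hx0 : 0 ≤ x := le_quadRoot_of (by linarith)
  set α := m * (m + p) + w
  set β := w * (m + p)
  have hα : 0 < α := by positivity
  have hβ : β < α * x := by
    have key : (β / α) ^ 2 + m * (β / α) = w - w ^ 2 * (w - p * (m + p)) / α ^ 2 := by
      field_simp
      ring
    have hgap : 0 < w ^ 2 * (w - p * (m + p)) / α ^ 2 := by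
      have : 0 < w - p * (m + p) := by linarith
      positivity
    have : β / α < x := lt_quadRoot_of (by rw [key]; linarith)
    rw [div_lt_iff₀ hα] at this
    linarith
  set u := (w - m - p) / w * x
  have hu : u * w = (w - m - p) * x := by
    simp only [u]
    field_simp
  have hu0 : 0 ≤ u := mul_nonneg (div_nonneg (by linarith) hw0.le) hx0
  have key : w ^ 2 * ((1 + u) ^ 2 + (m - 1) * (1 + u) - (w - p)) = (w - m - p) * (α * x - β) := by
    linear_combination (u * w + (w - m - p) * x + (m + 1) * w) * hu + (w - m - p) ^ 2 * hx
  apply quadRoot_lt_of _ (by linarith)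
  have : 0 < w ^ 2 * ((1 + u) ^ 2 + (m - 1) * (1 + u) - (w - p)) := by
    rw [key]
    exact mul_pos (by linarith) (by linarith)
  nlinarith [(pos_iff_pos_of_mul_pos this).1 (by positivity)]

end quadRoot

section L

variable {n k p : ℝ}

lemma L_eq_quadRoot (n k p : ℝ) : L n k p = quadRoot (p * n - k - 1) ((n - k) * p) := by
  rw [L, quadRoot, show (p * n - k + 1) ^ 2 + 4 * (1 - p) * k
    = (p * n - k - 1) ^ 2 + 4 * ((n - k) * p) by ring]
  ring

lemma one_le_L (hk : 0 ≤ k) (hp : p ≤ 1) : 1 ≤ L n k p := by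
  rw [L_eq_quadRoot]
  exact le_quadRoot_of (by nlinarith)

lemma one_lt_L (hk : 0 < k) (hp : p < 1) : 1 < L n k p := by
  rw [L_eq_quadRoot]
  exact lt_quadRoot_of (by nlinarith)

lemma L_zero (h : 0 ≤ p * n) : L n 0 p = 1 := by
  rw [L, show (p * n - 0 + 1) ^ 2 + 4 * (1 - p) * 0 = (p * n + 1) ^ 2 by ring,
    Real.sqrt_sq (by linarith)]
  ring

lemma L_succ_lt (hp0 : 0 < p) (hp1 : p < 1) (hk : 0 ≤ k) (hkn : k + 1 ≤ p * n) :
    L n (k + 1) p < 1 + (k + 1) * (1 - p) / ((n - k) * p) * L n k p := by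
  have h := quadRoot_sub_lt (m := p * n - k - 1) (w := (n - k) * p) (by linarith) hp0
    (by nlinarith) (by nlinarith)
  rw [L_eq_quadRoot, L_eq_quadRoot]
  convert h using 3 <;> ring

end L

section V

variable {n k p : ℝ}

lemma V_eq_add_V_zero (n k p a : ℝ) : V n k p a = a + V n (k - a) p 0 := by
  rw [V, V, show n - (k - a) + 0 + 1 = n - k + a + 1 by ring,
    show p * n + p - (k - a) + 0 = p * n + p - k + a by ring]
  ring

lemma V_zero_zero (hp0 : 0 < p) (hn : 0 ≤ n) : V n 0 p 0 = 1 := by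
  have : 0 < p * n + p - 0 + 0 := by nlinarith
  rw [V, zero_add, div_eq_one_iff_eq this.ne']
  ring

lemma one_lt_V_zero_succ_sub_mul {j : ℝ} (hp0 : 0 < p) (hp1 : p < 1) (hj : 0 ≤ j)
    (hjn : j + 1 ≤ p * n) :
    1 < V n (j + 1) p 0 - (j + 1) * (1 - p) / ((n - j) * p) * V n j p 0 := by
  have hd0 : 0 < p * n + p - j := by linarith
  have hd1 : 0 < p * n + p - j - 1 := by linarith
  have hnj : 0 < n - j := by nlinarith
  have key : V n (j + 1) p 0 - (j + 1) * (1 - p) / ((n - j) * p) * V n j p 0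
      = 1 + (j + 1) * (1 - p) ^ 2 * (n + 1) / ((p * n + p - j - 1) * (n - j) * (p * n + p - j)) := by
    have e1 : V n (j + 1) p 0 = p * (n - j) / (p * n + p - j - 1) := by rw [V]; ring
    have e0 : V n j p 0 = p * (n - j + 1) / (p * n + p - j) := by rw [V]; ring
    have := hd0.ne'
    have := hnj.ne'
    have := hp0.ne'
    rw [e1, e0, div_mul_div_comm, div_sub_div _ _ hd1.ne' (by positivity),
      one_add_div (by positivity), div_eq_div_iff (by positivity) (by positivity)]
    ring
  have : 0 < 1 - p := by linarith
  have : 0 < n + 1 := by linarith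
  rw [key, lt_add_iff_pos_right]
  positivity

lemma V_eq_add_add_div (n k p a : ℝ) (h : a + (p * (n + 1) - k) ≠ 0) :
    V n k p a = a + p + p * (1 - p) * (n + 1) / (a + (p * (n + 1) - k)) := by
  rw [V, show p * n + p - k + a = a + (p * (n + 1) - k) by ring]
  field_simp
  ring

lemma add_lt_V (hp0 : 0 < p) (hp1 : p < 1) (hk0 : 0 ≤ k) (hk : k ≤ p * n) {a : ℝ} (ha : 0 ≤ a) :
    a + p < V n k p a := by
  have hc : 0 < a + (p * (n + 1) - k) := by linarith
  have hn : 0 < n + 1 := by nlinarith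
  have : 0 < 1 - p := by linarith
  rw [V_eq_add_add_div n k p a hc.ne']
  have : 0 < p * (1 - p) * (n + 1) / (a + (p * (n + 1) - k)) := by positivity
  linarith

lemma V_zero_lt {f : ℝ} (hn : 0 < n) (hf0 : 0 < f) (hfp : f < p) (hp1 : p < 1) :
    V n (f * n) p 0 < (1 - f) * p / (p - f) := by
  have h1 : 0 < p * n + p - f * n + 0 := by nlinarith
  rw [V, zero_add, div_lt_div_iff₀ h1 (by linarith)]
  nlinarith [mul_pos (mul_pos hf0 (sub_pos.2 hp1)) hn]

end V

noncomputable def tailRatio (n k : ℕ) (p : ℝ) : ℝ := B n k p / b n k p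

noncomputable def stepRatio (n k : ℕ) (p : ℝ) : ℝ := ((k : ℝ) + 1) * (1 - p) / (((n : ℝ) - k) * p)

section tailRatio

variable {n k : ℕ} {p : ℝ}

lemma b_pos (hp0 : 0 < p) (hp1 : p < 1) (hkn : k ≤ n) : 0 < b n k p := by
  have : (0 : ℝ) < n.choose k := mod_cast Nat.choose_pos hkn
  have : 0 < 1 - p := by linarith
  unfold b
  positivity

lemma B_succ : B n (k + 1) p = B n k p + b n (k + 1) p :=
  Finset.sum_range_succ _ _

lemma succ_mul_b_succ (hk : k < n) :
    ((k : ℝ) + 1) * (1 - p) * b n (k + 1) p = ((n : ℝ) - k) * p * b n k p := by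
  have hchoose : (n.choose (k + 1) : ℝ) * ((k : ℝ) + 1) = n.choose k * ((n : ℝ) - k) := by
    rw [← Nat.cast_sub hk.le]
    exact_mod_cast Nat.choose_succ_right_eq n k
  unfold b
  rw [show n - k = n - (k + 1) + 1 by omega, pow_succ p k, pow_succ (1 - p) (n - (k + 1))]
  linear_combination p ^ k * p * (1 - p) * (1 - p) ^ (n - (k + 1)) * hchoose

lemma one_le_tailRatio (hp0 : 0 < p) (hp1 : p < 1) (hkn : k ≤ n) : 1 ≤ tailRatio n k p := by
  have hb : b n k p ≤ B n k p := by
    have : 0 < 1 - p := by linarith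
    exact Finset.single_le_sum (f := fun j => (n.choose j : ℝ) * p ^ j * (1 - p) ^ (n - j))
      (fun _ _ => by positivity) (Finset.self_mem_range_succ k)
  exact (one_le_div (b_pos hp0 hp1 hkn)).2 hb

lemma tailRatio_zero (hp1 : p < 1) : tailRatio n 0 p = 1 := by
  have : b n 0 p ≠ 0 := by
    simp only [b, Nat.choose_zero_right, Nat.cast_one, pow_zero, one_mul]
    exact pow_ne_zero _ (by linarith)
  rw [tailRatio, show B n 0 p = b n 0 p from Finset.sum_range_one _, div_self this]

lemma tailRatio_succ (hp0 : 0 < p) (hp1 : p < 1) (hk : k < n) :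
    tailRatio n (k + 1) p = 1 + stepRatio n k p * tailRatio n k p := by
  have hb := b_pos hp0 hp1 hk.le
  have hb' := b_pos hp0 hp1 hk
  have hnk : (0 : ℝ) < n - k := by rw [sub_pos]; exact_mod_cast hk
  rw [tailRatio, tailRatio, stepRatio, B_succ, add_div, div_self hb'.ne', add_comm, div_mul_div_comm]
  congr 1
  rw [div_eq_div_iff hb'.ne' (by positivity)]
  linear_combination -B n k p * succ_mul_b_succ (p := p) hk

lemma lt_of_cast_succ_le_mul (hp0 : 0 < p) (hp1 : p < 1) (h : (k : ℝ) + 1 ≤ p * n) : k < n := by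
  exact_mod_cast (show (k : ℝ) < n by nlinarith)

lemma stepRatio_nonneg (hp0 : 0 < p) (hp1 : p < 1) (hk : k < n) : 0 ≤ stepRatio n k p := by
  have : (0 : ℝ) < n - k := by rw [sub_pos]; exact_mod_cast hk
  have : 0 < 1 - p := by linarith
  unfold stepRatio
  positivity

lemma stepRatio_lt_one (hp0 : 0 < p) (hp1 : p < 1) (hk : (k : ℝ) + 1 ≤ p * n) :
    stepRatio n k p < 1 := by
  have : (0 : ℝ) < n - k := by
    rw [sub_pos]; exact_mod_cast lt_of_cast_succ_le_mul hp0 hp1 hk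
  rw [stepRatio, div_lt_one (by positivity)]
  nlinarith

lemma tailRatio_succ_lt (hp0 : 0 < p) (hp1 : p < 1) (hk : (k : ℝ) + 1 ≤ p * n) :
    tailRatio n (k + 1) p < 1 + tailRatio n k p := by
  have hkn := lt_of_cast_succ_le_mul hp0 hp1 hk
  have hS := one_le_tailRatio hp0 hp1 hkn.le
  rw [tailRatio_succ hp0 hp1 hkn]
  nlinarith [stepRatio_lt_one hp0 hp1 hk]

lemma tailRatio_add_le (hp0 : 0 < p) (hp1 : p < 1) (d : ℕ) (hk : ((k + d : ℕ) : ℝ) ≤ p * n) :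
    tailRatio n (k + d) p ≤ d + tailRatio n k p ∧
      (0 < d → tailRatio n (k + d) p < d + tailRatio n k p) := by
  induction d with
  | zero => simp
  | succ d ih =>
    push_cast at hk ih ⊢
    have hstep := tailRatio_succ_lt (k := k + d) hp0 hp1 (by push_cast; linarith)
    have := (ih (by linarith)).1
    rw [← add_assoc]
    constructor <;> intros <;> linarith

lemma le_and_lt_of_stepRatio {x y : ℕ → ℝ} (hp0 : 0 < p) (hp1 : p < 1) (hk : (k : ℝ) ≤ p * n)
    (h0 : x 0 ≤ y 0) (hstep : ∀ j : ℕ, (j : ℝ) + 1 ≤ p * n →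
      x (j + 1) - stepRatio n j p * x j < y (j + 1) - stepRatio n j p * y j) :
    x k ≤ y k ∧ (0 < k → x k < y k) := by
  have hj1 {j : ℕ} (hj : j < k) : (j : ℝ) + 1 ≤ p * n :=
    le_trans (by exact_mod_cast Nat.succ_le_of_lt hj) hk
  exact le_and_lt_of_succ_sub_mul_lt h0
    (fun j hj => stepRatio_nonneg hp0 hp1 (lt_of_cast_succ_le_mul hp0 hp1 (hj1 hj)))
    (fun j hj => hstep j (hj1 hj))

lemma L_le_tailRatio (hp0 : 0 < p) (hp1 : p < 1) (hk : (k : ℝ) ≤ p * n) :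
    L n k p ≤ tailRatio n k p ∧ (0 < k → L n k p < tailRatio n k p) := by
  refine le_and_lt_of_stepRatio (x := fun j => L n j p) (y := fun j => tailRatio n j p)
    hp0 hp1 hk ?_ fun j hj => ?_
  · rw [Nat.cast_zero, L_zero (by linarith [k.cast_nonneg (α := ℝ)]), tailRatio_zero hp1]
  · simp only [tailRatio_succ hp0 hp1 (lt_of_cast_succ_le_mul hp0 hp1 hj), add_sub_cancel_right,
      Nat.cast_succ, stepRatio]
    linarith [L_succ_lt hp0 hp1 j.cast_nonneg hj]

lemma tailRatio_le_V_zero (hp0 : 0 < p) (hp1 : p < 1) (hk : (k : ℝ) ≤ p * n) :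
    tailRatio n k p ≤ V n k p 0 ∧ (0 < k → tailRatio n k p < V n k p 0) := by
  refine le_and_lt_of_stepRatio (x := fun j => tailRatio n j p) (y := fun j => V n j p 0)
    hp0 hp1 hk ?_ fun j hj => ?_
  · rw [Nat.cast_zero, V_zero_zero hp0 n.cast_nonneg, tailRatio_zero hp1]
  · simp only [tailRatio_succ hp0 hp1 (lt_of_cast_succ_le_mul hp0 hp1 hj), add_sub_cancel_right,
      Nat.cast_succ, stepRatio]
    linarith [one_lt_V_zero_succ_sub_mul hp0 hp1 j.cast_nonneg hj]

lemma tailRatio_le_V (hp0 : 0 < p) (hp1 : p < 1) (hk : (k : ℝ) ≤ p * n) (a : ℕ) :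
    tailRatio n k p ≤ V n k p a ∧ (0 < k → tailRatio n k p < V n k p a) := by
  rcases le_or_gt a k with hak | hka
  · obtain ⟨j, rfl⟩ := Nat.exists_eq_add_of_le' hak
    have hshift := tailRatio_add_le hp0 hp1 a hk
    have hj := tailRatio_le_V_zero hp0 hp1 (n := n) (k := j)
      (by push_cast at hk; linarith [a.cast_nonneg (α := ℝ)])
    rw [V_eq_add_V_zero, Nat.cast_add, add_sub_cancel_right]
    refine ⟨by linarith [hshift.1, hj.1], fun hpos => ?_⟩
    rcases Nat.eq_zero_or_pos a with rfl | ha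
    · simpa using hj.2 hpos
    · linarith [hshift.2 ha, hj.1]
  · have hle : tailRatio n k p ≤ k + 1 := by
      simpa [tailRatio_zero hp1] using (tailRatio_add_le (k := 0) hp0 hp1 k (by simpa using hk)).1
    have hV := add_lt_V hp0 hp1 k.cast_nonneg hk a.cast_nonneg
    have : (k : ℝ) + 1 ≤ a := by exact_mod_cast hka
    exact ⟨by linarith, fun _ => by linarith⟩

end tailRatio

section U

variable {n k p : ℝ}

lemma two_mul_L_eq (n k p : ℝ) : 2 * L n k p = 1 + p - (p * (n + 1) - k) +
    √(4 * (p * (1 - p) * (n + 1)) + (p * (n + 1) - k + p - 1) ^ 2) := by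
  rw [L, show (p * n - k + 1) ^ 2 + 4 * (1 - p) * k
    = 4 * (p * (1 - p) * (n + 1)) + (p * (n + 1) - k + p - 1) ^ 2 by ring]
  ring

lemma exists_V_lt_two_mul_L (hp0 : 0 < p) (hp1 : p < 1) (hk0 : 0 ≤ k) (hk : k ≤ p * n) :
    ∃ a : ℕ, V n k p a < 2 * L n k p := by
  set c := p * (n + 1) - k
  set D := p * (1 - p) * (n + 1)
  have hpc : p ≤ c := by linarith
  have hD : 0 < D := by
    have : 0 < n + 1 := by nlinarith
    have : 0 < 1 - p := by linarith
    positivity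
  have hsqrt : 2 * √D ≤ √(4 * D + (c + p - 1) ^ 2) := by
    rw [show 2 * √D = √(4 * D) by rw [Real.sqrt_mul' _ hD.le, show (4 : ℝ) = 2 ^ 2 by norm_num,
      Real.sqrt_sq zero_le_two]]
    exact Real.sqrt_le_sqrt (by nlinarith)
  suffices ∃ a : ℕ, (a + c) + D / (a + c) < 1 + √(4 * D + (c + p - 1) ^ 2) by
    obtain ⟨a, ha⟩ := this
    refine ⟨a, ?_⟩
    have : (0 : ℝ) < a + c := by linarith [a.cast_nonneg (α := ℝ)]
    rw [V_eq_add_add_div n k p a this.ne', two_mul_L_eq]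
    linarith
  rcases le_or_gt (√D) c with hc | hc
  · refine ⟨0, ?_⟩
    have htc : D / c ≤ c := by
      rw [div_le_iff₀ (by linarith), ← sq]
      exact (Real.sqrt_le_left (by linarith)).1 hc
    have hqt : 1 - p ≤ D / c := by
      rw [le_div_iff₀ (by linarith)]
      nlinarith
    have := add_lt_one_add_sqrt hp0 hp1 hpc hqt htc
    rw [div_mul_cancel₀ _ (by linarith), add_comm (D / c)] at this
    simpa using this
  · refine ⟨⌈√D - c⌉₊, ?_⟩
    have h1 := Nat.le_ceil (√D - c)
    have h2 := Nat.ceil_lt_add_one (sub_pos.2 hc).le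
    have := add_div_lt_one_add_two_mul_sqrt hD (x := ⌈√D - c⌉₊ + c) (by linarith) (by linarith)
    linarith

lemma U_le_V (hp0 : 0 < p) (hp1 : p < 1) (hk0 : 0 ≤ k) (hk : k ≤ p * n) (a : ℕ) :
    U n k p ≤ V n k p a :=
  ciInf_le ⟨0, by rintro _ ⟨b, rfl⟩; linarith [add_lt_V hp0 hp1 hk0 hk b.cast_nonneg]⟩ a

lemma exists_U_eq_V (hp0 : 0 < p) (hp1 : p < 1) (hk0 : 0 ≤ k) (hk : k ≤ p * n) :
    ∃ a₀ : ℕ, U n k p = V n k p a₀ := by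
  have htends : Filter.Tendsto (fun a : ℕ => V n k p a) Filter.cofinite Filter.atTop := by
    rw [Nat.cofinite_eq_atTop]
    exact Filter.tendsto_atTop_mono (fun a => by linarith [add_lt_V hp0 hp1 hk0 hk a.cast_nonneg])
      tendsto_natCast_atTop_atTop
  obtain ⟨a₀, ha₀⟩ := htends.exists_forall_le
  exact ⟨a₀, le_antisymm (U_le_V hp0 hp1 hk0 hk a₀) (le_ciInf ha₀)⟩

lemma U_lt_two_mul_L (hp0 : 0 < p) (hp1 : p < 1) (hk0 : 0 ≤ k) (hk : k ≤ p * n) :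
    U n k p < 2 * L n k p := by
  obtain ⟨a, ha⟩ := exists_V_lt_two_mul_L hp0 hp1 hk0 hk
  exact (U_le_V hp0 hp1 hk0 hk a).trans_lt ha

end U

lemma tailRatio_le_U {n k : ℕ} {p : ℝ} (hp0 : 0 < p) (hp1 : p < 1) (hk : (k : ℝ) ≤ p * n) :
    tailRatio n k p ≤ U n k p ∧ (0 < k → tailRatio n k p < U n k p) := by
  obtain ⟨a₀, hU⟩ := exists_U_eq_V hp0 hp1 k.cast_nonneg hk
  rw [hU]
  exact tailRatio_le_V hp0 hp1 hk a₀

theorem binomial_ratio_bounds_general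
    (k n : ℕ) (p : ℝ) (hp0 : 0 < p) (hp1 : p < 1)
    (hk : (k : ℝ) ≤ p * n) :
    (1 ≤ L n k p ∧ L n k p ≤ B n k p / b n k p ∧
      B n k p / b n k p ≤ U n k p ∧ U n k p < 2 * L n k p) ∧
    (1 ≤ k →
      (1 < L n k p ∧ L n k p < B n k p / b n k p ∧
        B n k p / b n k p < U n k p ∧ U n k p < 2 * L n k p)) ∧
    (0 < (k : ℝ) / n → (k : ℝ) / n < p →
      (1 < L n k p ∧ L n k p < B n k p / b n k p ∧
        B n k p / b n k p < U n k p ∧ U n k p ≤ V n k p 0 ∧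
        V n k p 0 < (1 - (k : ℝ) / n) * p / (p - (k : ℝ) / n))) := by
  have hk0 : (0 : ℝ) ≤ k := k.cast_nonneg
  obtain ⟨hLS, hLS'⟩ := L_le_tailRatio hp0 hp1 hk
  obtain ⟨hSU, hSU'⟩ := tailRatio_le_U hp0 hp1 hk
  have hU2L := U_lt_two_mul_L hp0 hp1 hk0 hk
  have hstrict (hk1 : 1 ≤ k) : 1 < L n k p ∧ L n k p < B n k p / b n k p ∧
      B n k p / b n k p < U n k p ∧ U n k p < 2 * L n k p :=
    ⟨one_lt_L (by exact_mod_cast hk1) hp1, hLS' hk1, hSU' hk1, hU2L⟩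
  refine ⟨⟨one_le_L hk0 hp1.le, hLS, hSU, hU2L⟩, hstrict, fun hf0 hfp => ?_⟩
  have hn : (0 : ℝ) < n := Nat.cast_pos.2 (Nat.pos_of_ne_zero (by rintro rfl; simp at hf0))
  have hk1 : 1 ≤ k := by exact_mod_cast (div_pos_iff_of_pos_right hn).1 hf0
  have hV := V_zero_lt hn hf0 hfp hp1
  rw [div_mul_cancel₀ _ hn.ne'] at hV
  obtain ⟨h1, h2, h3, -⟩ := hstrict hk1
  exact ⟨h1, h2, h3, by simpa using U_le_V hp0 hp1 hk0 hk 0, hV⟩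

theorem binomial_ratio_bounds
    (k n : ℕ) (hn : 0 < n) (p : ℝ) (hp0 : 0 < p) (hp1 : p < 1)
    (hk : (k : ℝ) ≤ p * n) :
    (1 ≤ L n k p ∧ L n k p ≤ B n k p / b n k p ∧
      B n k p / b n k p ≤ U n k p ∧ U n k p < 2 * L n k p) ∧
    (1 ≤ k →
      (1 < L n k p ∧ L n k p < B n k p / b n k p ∧
        B n k p / b n k p < U n k p ∧ U n k p < 2 * L n k p)) ∧
    (0 < (k : ℝ) / n → (k : ℝ) / n < p →
      (1 < L n k p ∧ L n k p < B n k p / b n k p ∧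
        B n k p / b n k p < U n k p ∧ U n k p ≤ V n k p 0 ∧
        V n k p 0 < (1 - (k : ℝ) / n) * p / (p - (k : ℝ) / n))) :=
  binomial_ratio_bounds_general k n p hp0 hp1 hk
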